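/- arXiv:1212.6595 — 3 statements merged into one kernel-verified Lean document; each statement's English description precedes it below -/
import Mathlib

section
/- Let f_1, …, f_n and q_1, …, q_{n−1} be smooth real functions on an open interval I, and define the first-order operators D_i f = f' − q_i·f for i = 1, …, n−1. Then for all x ∈ I, W[f_1, f_2, …, f_n](x) = det( (D_{j−1} ∘ ⋯ ∘ D_2 ∘ D_1 f_k)(x) )_{1≤j,k≤n}, where for j = 1 the composite operator is the identity. -/
/-- The Wronskian of `n` real functions: `W[f₁,…,fₙ](x) = det(f_k^{(j-1)}(x))`. -/
noncomputable def wronskian (n : ℕ) (f : Fin n → ℝ → ℝ) (x : ℝ) : ℝ :=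
  Matrix.det (Matrix.of fun j k : Fin n => iteratedDeriv (j : ℕ) (f k) x)

/-- Iterated covariant derivative: `covIter q 0 f = f` and
`covIter q (m+1) f = D_{m+1} (covIter q m f)` where `D_i f = f' - qᵢ·f`
(here `q i` plays the role of `q_{i+1}`). -/
noncomputable def covIter (q : ℕ → ℝ → ℝ) : ℕ → (ℝ → ℝ) → (ℝ → ℝ)
  | 0, f => f
  | m + 1, f => fun x => deriv (covIter q m f) x - q m x * covIter q m f x

/-- Coefficients expressing `covIter q m f` as a combination of iterated derivatives. -/
noncomputable def covCoeff (q : ℕ → ℝ → ℝ) : ℕ → ℕ → ℝ → ℝ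
  | 0, i => if i = 0 then (fun _ => 1) else (fun _ => 0)
  | m + 1, i => fun x =>
      (if i = 0 then 0 else covCoeff q m (i - 1) x)
        + deriv (covCoeff q m i) x - q m x * covCoeff q m i x

lemma covCoeff_of_lt (q : ℕ → ℝ → ℝ) : ∀ m i, m < i → covCoeff q m i = fun _ => 0 := by
  intro m
  induction m with
  | zero =>
    intro i hi
    have h : i ≠ 0 := by omega
    simp [covCoeff, h]
  | succ m ih =>
    intro i hi
    have h1 : covCoeff q m i = fun _ => 0 := ih i (Nat.lt_of_succ_lt hi)
    have hine : i ≠ 0 := by omega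
    have h2 : covCoeff q m (i - 1) = fun _ => 0 := ih (i - 1) (by omega)
    funext x
    simp [covCoeff, hine, h1, h2]

lemma covCoeff_diag (q : ℕ → ℝ → ℝ) : ∀ m, covCoeff q m m = fun _ => 1 := by
  intro m
  induction m with
  | zero => simp [covCoeff]
  | succ m ih =>
    have h1 : covCoeff q m (m + 1) = fun _ => 0 := covCoeff_of_lt q m (m + 1) (by omega)
    funext x
    simp [covCoeff, h1, ih]

lemma covCoeff_contDiffOn (q : ℕ → ℝ → ℝ) (s : Set ℝ) (hs : IsOpen s) :
    ∀ m, (∀ i < m, ContDiffOn ℝ (⊤ : ℕ∞) (q i) s) → ∀ i, ContDiffOn ℝ (⊤ : ℕ∞) (covCoeff q m i) s := by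
  intro m
  induction m with
  | zero =>
    intro _ i
    by_cases hi : i = 0 <;> simp [covCoeff, hi] <;> exact contDiffOn_const
  | succ m ih =>
    intro hq i
    have hq' : ∀ i < m, ContDiffOn ℝ (⊤ : ℕ∞) (q i) s := fun i hi => hq i (by omega)
    have hqm : ContDiffOn ℝ (⊤ : ℕ∞) (q m) s := hq m (by omega)
    have h1 : ContDiffOn ℝ (⊤ : ℕ∞) (fun x => if i = 0 then (0 : ℝ) else covCoeff q m (i - 1) x) s := by
      by_cases hi : i = 0
      · simp [hi]; exact contDiffOn_const
      · simp only [hi, if_false]; exact ih hq' (i - 1)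
    have h2 : ContDiffOn ℝ (⊤ : ℕ∞) (deriv (covCoeff q m i)) s :=
      (ih hq' i).deriv_of_isOpen hs (by simp)
    have h3 : ContDiffOn ℝ (⊤ : ℕ∞) (fun x => q m x * covCoeff q m i x) s :=
      hqm.mul (ih hq' i)
    show ContDiffOn ℝ (⊤ : ℕ∞)
      (fun x => (if i = 0 then 0 else covCoeff q m (i - 1) x)
        + deriv (covCoeff q m i) x - q m x * covCoeff q m i x) s
    exact (h1.add h2).sub h3

lemma iteratedDeriv_contDiffOn {f : ℝ → ℝ} {s : Set ℝ} (hs : IsOpen s)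
    (hf : ContDiffOn ℝ (⊤ : ℕ∞) f s) : ∀ i, ContDiffOn ℝ (⊤ : ℕ∞) (iteratedDeriv i f) s := by
  intro i
  induction i with
  | zero => simpa [iteratedDeriv_zero] using hf
  | succ i ih =>
    rw [iteratedDeriv_succ]
    exact ih.deriv_of_isOpen hs (by simp)

lemma covIter_eq_sum (q : ℕ → ℝ → ℝ) (s : Set ℝ) (hs : IsOpen s) {f : ℝ → ℝ}
    (hf : ContDiffOn ℝ (⊤ : ℕ∞) f s) :
    ∀ m, (∀ i < m, ContDiffOn ℝ (⊤ : ℕ∞) (q i) s) → ∀ x ∈ s,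
      covIter q m f x
        = ∑ i ∈ Finset.range (m + 1), covCoeff q m i x * iteratedDeriv i f x := by
  intro m
  induction m with
  | zero =>
    intro _ x _
    simp [covIter, covCoeff, iteratedDeriv_zero]
  | succ m ih =>
    intro hq x hx
    have hq' : ∀ i < m, ContDiffOn ℝ (⊤ : ℕ∞) (q i) s := fun i hi => hq i (by omega)
    have IH := ih hq'
    -- differentiability facts at x
    have hxnhds : s ∈ nhds x := hs.mem_nhds hx
    have hcd : ∀ i, DifferentiableAt ℝ (covCoeff q m i) x := fun i =>
      ((covCoeff_contDiffOn q s hs m hq' i).contDiffAt hxnhds).differentiableAt (by simp)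
    have hgd : ∀ i, DifferentiableAt ℝ (iteratedDeriv i f) x := fun i =>
      ((iteratedDeriv_contDiffOn hs hf i).contDiffAt hxnhds).differentiableAt (by simp)
    -- deriv of covIter q m f at x
    have heq : covIter q m f =ᶠ[nhds x]
        fun y => ∑ i ∈ Finset.range (m + 1), covCoeff q m i y * iteratedDeriv i f y :=
      Filter.eventuallyEq_of_mem hxnhds IH
    have hderiv : deriv (covIter q m f) x
        = ∑ i ∈ Finset.range (m + 1),
            (deriv (covCoeff q m i) x * iteratedDeriv i f x
              + covCoeff q m i x * iteratedDeriv (i + 1) f x) := by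
      rw [heq.deriv_eq, deriv_fun_sum (A := fun i y => covCoeff q m i y * iteratedDeriv i f y)
        (fun i _ => ((hcd i).mul (hgd i)))]
      refine Finset.sum_congr rfl fun i _ => ?_
      rw [deriv_fun_mul (hcd i) (hgd i), iteratedDeriv_succ]
    show deriv (covIter q m f) x - q m x * covIter q m f x = _
    rw [hderiv, IH x hx]
    -- rewrite everything as sums over range (m+2)
    have hz : covCoeff q m (m + 1) = fun _ => 0 := covCoeff_of_lt q m (m + 1) (by omega)
    have hdz : deriv (covCoeff q m (m + 1)) x = 0 := by rw [hz]; simp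
    rw [Finset.mul_sum]
    rw [show (∑ i ∈ Finset.range (m + 2), covCoeff q (m + 1) i x * iteratedDeriv i f x)
        = ∑ i ∈ Finset.range (m + 2),
            (((if i = 0 then 0 else covCoeff q m (i - 1) x)
              + deriv (covCoeff q m i) x - q m x * covCoeff q m i x)
              * iteratedDeriv i f x) from rfl]
    have e1 : ∑ i ∈ Finset.range (m + 2),
        (if i = 0 then (0:ℝ) else covCoeff q m (i - 1) x) * iteratedDeriv i f x
        = ∑ i ∈ Finset.range (m + 1), covCoeff q m i x * iteratedDeriv (i + 1) f x := by
      rw [Finset.sum_range_succ' (fun i =>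
        (if i = 0 then (0:ℝ) else covCoeff q m (i - 1) x) * iteratedDeriv i f x) (m + 1)]
      simp
    have e2 : ∑ i ∈ Finset.range (m + 2),
        (deriv (covCoeff q m i) x - q m x * covCoeff q m i x) * iteratedDeriv i f x
        = ∑ i ∈ Finset.range (m + 1),
            (deriv (covCoeff q m i) x - q m x * covCoeff q m i x) * iteratedDeriv i f x := by
      rw [Finset.sum_range_succ]
      simp [hz, hdz]
    calc (∑ i ∈ Finset.range (m + 1),
            (deriv (covCoeff q m i) x * iteratedDeriv i f x
              + covCoeff q m i x * iteratedDeriv (i + 1) f x))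
          - ∑ i ∈ Finset.range (m + 1), q m x * (covCoeff q m i x * iteratedDeriv i f x)
        = (∑ i ∈ Finset.range (m + 1), covCoeff q m i x * iteratedDeriv (i + 1) f x)
          + ∑ i ∈ Finset.range (m + 1),
              (deriv (covCoeff q m i) x - q m x * covCoeff q m i x) * iteratedDeriv i f x := by
          rw [← Finset.sum_sub_distrib, ← Finset.sum_add_distrib]
          exact Finset.sum_congr rfl fun i _ => by ring
      _ = ∑ i ∈ Finset.range (m + 2),
            (((if i = 0 then 0 else covCoeff q m (i - 1) x)
              + deriv (covCoeff q m i) x - q m x * covCoeff q m i x)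
              * iteratedDeriv i f x) := by
          rw [← e1, ← e2, ← Finset.sum_add_distrib]
          exact Finset.sum_congr rfl fun i _ => by ring

/-- the Wronskian is invariant when the iterated derivatives are replaced
by iterated covariant derivatives `D_i = d/dx − qᵢ(x)`. -/
theorem wronskian_covariant_derivative
    (a b : ℝ) (n : ℕ) (f : Fin n → ℝ → ℝ) (q : ℕ → ℝ → ℝ)
    (hf : ∀ k, ContDiffOn ℝ (⊤ : ℕ∞) (f k) (Set.Ioo a b))
    (hq : ∀ i < n - 1, ContDiffOn ℝ (⊤ : ℕ∞) (q i) (Set.Ioo a b)) :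
    ∀ x ∈ Set.Ioo a b,
      wronskian n f x
        = Matrix.det (Matrix.of fun j k : Fin n => covIter q (j : ℕ) (f k) x) := by
  intro x hx
  set s := Set.Ioo a b with hsdef
  have hs : IsOpen s := isOpen_Ioo
  set A : Matrix (Fin n) (Fin n) ℝ :=
    Matrix.of fun j k : Fin n => iteratedDeriv (j : ℕ) (f k) x with hA
  set L : Matrix (Fin n) (Fin n) ℝ :=
    Matrix.of fun j i : Fin n => covCoeff q (j : ℕ) (i : ℕ) x with hL
  have hM : (Matrix.of fun j k : Fin n => covIter q (j : ℕ) (f k) x) = L * A := by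
    ext j k
    have hqj : ∀ i < (j : ℕ), ContDiffOn ℝ (⊤ : ℕ∞) (q i) s := by
      intro i hi
      exact hq i (by omega)
    have := covIter_eq_sum q s hs (hf k) (j : ℕ) hqj x hx
    simp only [Matrix.mul_apply, Matrix.of_apply, hL, hA]
    rw [this]
    rw [Fin.sum_univ_eq_sum_range
      (fun i => covCoeff q (j : ℕ) i x * iteratedDeriv i (f k) x) n]
    apply Finset.sum_subset
    · intro i hi
      simp only [Finset.mem_range] at hi ⊢
      omega
    · intro i _ hi
      simp only [Finset.mem_range, not_lt] at hi
      rw [covCoeff_of_lt q (j : ℕ) i (by omega)]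
      simp
  have hLdet : L.det = 1 := by
    rw [Matrix.det_of_lowerTriangular L]
    · apply Finset.prod_eq_one
      intro i _
      simp only [hL, Matrix.of_apply]
      rw [covCoeff_diag q (i : ℕ)]
    · intro j i hji
      simp only [hL, Matrix.of_apply]
      rw [covCoeff_of_lt q (j : ℕ) (i : ℕ) (by exact_mod_cast hji)]
  rw [hM, Matrix.det_mul, hLdet, one_mul]
  rfl
end

section
/- Let g be a real number and v a non-negative integer. The function φ̃_v(x) = e^{x²/2}·x^{1−g}·L_v^{(1/2−g)}(−x²) satisfies the Schrödinger equation −φ̃_v''(x) + ( x² + g(g−1)/x² − (1+2g) )·φ̃_v(x) = −4(v+1)·φ̃_v(x) for all x in the open interval (0, ∞). -/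
open Polynomial

/-- The generalized Laguerre polynomial
`L_n^{(α)}(x) = Σ_{k=0}^n ((−1)^k/k!)·((α+k+1)⋯(α+n)/(n−k)!)·x^k`. -/
noncomputable def laguerreL (α : ℝ) (n : ℕ) : Polynomial ℝ :=
  ∑ k ∈ Finset.range (n + 1),
    Polynomial.C ((-1 : ℝ) ^ k / (Nat.factorial k)
      * (∏ i ∈ Finset.Ico (k + 1) (n + 1), (α + i)) / (Nat.factorial (n - k)))
      * X ^ k

/-!
Conjugating the radial oscillator Hamiltonian by the gauge factor `e^{x²/2} x^{1-g}` and
substituting `t = -x²` turns `H` into `-4 (1 - D_α)` with `α = 1/2 - g`, where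
`D_α p = t p'' + (α + 1 - t) p'` is the Laguerre operator: the second derivative of `x^{1-g}`
cancels the centrifugal term `g(g-1)/x²` exactly. The coefficient recursion of `L_v^{(α)}` shows
that it is an eigenpolynomial of `D_α` with eigenvalue `-v`, whence the eigenvalue `-4(v+1)`.
-/

noncomputable def laguerreOperator (α : ℝ) (p : ℝ[X]) : ℝ[X] :=
  X * derivative (derivative p) + (C (α + 1) - X) * derivative p

open Nat in
theorem coeff_laguerreL (α : ℝ) (n k : ℕ) :
    (laguerreL α n).coeff k = if k ≤ n then
      (-1) ^ k / k ! * (∏ i ∈ Finset.Ico (k + 1) (n + 1), (α + i)) / (n - k)! else 0 := by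
  simp only [laguerreL, finsetSum_coeff, coeff_C_mul, coeff_X_pow, mul_ite, mul_one, mul_zero,
    Finset.sum_ite_eq, Finset.mem_range, Nat.lt_succ_iff]

open Nat in
theorem laguerreL_coeff_succ (α : ℝ) (n k : ℕ) :
    (k + 1) * (α + k + 1) * (laguerreL α n).coeff (k + 1)
      = (k - n) * (laguerreL α n).coeff k := by
  rw [coeff_laguerreL, coeff_laguerreL]
  rcases lt_trichotomy k n with hlt | rfl | hgt
  · obtain ⟨m, rfl⟩ := Nat.exists_eq_add_of_lt hlt
    have hprod : ∏ i ∈ Finset.Ico (k + 1) (k + m + 1 + 1), (α + i)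
        = (α + (k + 1 : ℕ)) * ∏ i ∈ Finset.Ico (k + 1 + 1) (k + m + 1 + 1), (α + i) :=
      Finset.prod_eq_prod_Ico_succ_bot (by omega) _
    rw [if_pos (by omega), if_pos (by omega), hprod, show k + m + 1 - k = m + 1 by omega,
      show k + m + 1 - (k + 1) = m by omega, factorial_succ, factorial_succ]
    push_cast
    field_simp
    ring
  · simp
  · simp [show ¬ k + 1 ≤ n by omega, show ¬ k ≤ n by omega]

theorem laguerreOperator_laguerreL (α : ℝ) (n : ℕ) :
    laguerreOperator α (laguerreL α n) = -(C (n : ℝ) * laguerreL α n) := by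
  ext (_ | k)
  · have := laguerreL_coeff_succ α n 0
    simp only [laguerreOperator, coeff_add, coeff_neg, sub_mul, coeff_sub, mul_coeff_zero,
      coeff_X_zero, coeff_derivative, coeff_C_zero]
    push_cast at this ⊢
    linear_combination this
  · have := laguerreL_coeff_succ α n (k + 1)
    simp only [laguerreOperator, coeff_add, coeff_neg, coeff_C_mul, sub_mul, coeff_sub,
      coeff_X_mul, coeff_derivative]
    push_cast at this ⊢
    linear_combination this

open Filter Topology in
theorem deriv_deriv_eq_of_hasDerivAt {𝕜 F : Type*} [NontriviallyNormedField 𝕜]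
    [NormedAddCommGroup F] [NormedSpace 𝕜 F] {f f' : 𝕜 → F} {f'' : F} {x : 𝕜}
    {s : Set 𝕜}
    (hs : s ∈ 𝓝 x) (hf : ∀ y ∈ s, HasDerivAt f (f' y) y) (hf' : HasDerivAt f' f'' x) :
    deriv (deriv f) x = f'' := by
  have hderiv : deriv f =ᶠ[𝓝 x] f' := eventually_of_mem hs fun y hy => (hf y hy).deriv
  rw [hderiv.deriv_eq, hf'.deriv]

theorem HasDerivAt.second_mul {𝕜 𝔸 : Type*} [NontriviallyNormedField 𝕜]
    [NormedCommRing 𝔸] [NormedAlgebra 𝕜 𝔸] {u u' w w' : 𝕜 → 𝔸} {x : 𝕜} {u'' w'' : 𝔸}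
    (hu : HasDerivAt u (u' x) x) (hu' : HasDerivAt u' u'' x)
    (hw : HasDerivAt w (w' x) x) (hw' : HasDerivAt w' w'' x) :
    HasDerivAt (fun y => u' y * w y + u y * w' y)
      (u'' * w x + 2 * (u' x * w' x) + u x * w'') x :=
  ((hu'.mul hw).add (hu.mul hw')).congr_deriv (by ring)

theorem hasDerivAt_exp_sq_div_two (x : ℝ) :
    HasDerivAt (fun y => Real.exp (y ^ 2 / 2)) (x * Real.exp (x ^ 2 / 2)) x := by
  refine ((hasDerivAt_pow 2 x).div_const 2).exp.congr_deriv ?_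
  push_cast
  ring

theorem hasDerivAt_mul_exp_sq_div_two (x : ℝ) :
    HasDerivAt (fun y => y * Real.exp (y ^ 2 / 2)) ((1 + x ^ 2) * Real.exp (x ^ 2 / 2)) x :=
  ((hasDerivAt_id' x).mul (hasDerivAt_exp_sq_div_two x)).congr_deriv (by ring)

theorem Polynomial.hasDerivAt_eval_neg_sq (p : ℝ[X]) (x : ℝ) :
    HasDerivAt (fun y => p.eval (-y ^ 2)) (-(2 * x) * (derivative p).eval (-x ^ 2)) x := by
  refine ((p.hasDerivAt (-x ^ 2)).comp x (hasDerivAt_pow 2 x).fun_neg).congr_deriv ?_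
  push_cast
  ring

theorem Polynomial.hasDerivAt_mul_eval_neg_sq (p : ℝ[X]) (x : ℝ) :
    HasDerivAt (fun y => -(2 * y) * (derivative p).eval (-y ^ 2))
      (-2 * (derivative p).eval (-x ^ 2)
        + 4 * x ^ 2 * (derivative (derivative p)).eval (-x ^ 2)) x := by
  refine (((hasDerivAt_id x).const_mul 2).fun_neg.fun_mul
    ((derivative p).hasDerivAt_eval_neg_sq x)).congr_deriv ?_
  simp only [id]
  ring

theorem radialOscillator_gauge (g : ℝ) (p : ℝ[X]) {x : ℝ} (hx : 0 < x) :
    -(deriv (deriv (fun y : ℝ => Real.exp (y ^ 2 / 2) * y ^ (1 - g) * p.eval (-y ^ 2))) x)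
      + (x ^ 2 + g * (g - 1) / x ^ 2 - (1 + 2 * g))
        * (Real.exp (x ^ 2 / 2) * x ^ (1 - g) * p.eval (-x ^ 2))
    = -4 * (Real.exp (x ^ 2 / 2) * x ^ (1 - g)
        * (p - laguerreOperator (1 / 2 - g) p).eval (-x ^ 2)) := by
  have hpow {y : ℝ} (hy : 0 < y) (b : ℝ) : HasDerivAt (fun y => y ^ b) (b * y ^ (b - 1)) y :=
    Real.hasDerivAt_rpow_const (Or.inl hy.ne')
  have hgauge : ∀ y ∈ Set.Ioi (0 : ℝ),
      HasDerivAt (fun y => Real.exp (y ^ 2 / 2) * y ^ (1 - g))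
        (y * Real.exp (y ^ 2 / 2) * y ^ (1 - g)
          + Real.exp (y ^ 2 / 2) * ((1 - g) * y ^ (1 - g - 1))) y :=
    fun y hy => (hasDerivAt_exp_sq_div_two y).mul (hpow hy _)
  have hf : ∀ y ∈ Set.Ioi (0 : ℝ),
      HasDerivAt (fun y : ℝ => Real.exp (y ^ 2 / 2) * y ^ (1 - g) * p.eval (-y ^ 2)) _ y :=
    fun y hy => (hgauge y hy).mul (p.hasDerivAt_eval_neg_sq y)
  have hgauge' := (hasDerivAt_exp_sq_div_two x).second_mul (hasDerivAt_mul_exp_sq_div_two x)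
    (hpow hx _) ((hpow hx _).const_mul (1 - g))
  have hf' := (hgauge x hx).second_mul hgauge' (p.hasDerivAt_eval_neg_sq x)
    (p.hasDerivAt_mul_eval_neg_sq x)
  rw [deriv_deriv_eq_of_hasDerivAt (Ioi_mem_nhds hx) hf hf']
  have hpow_sub_one : x ^ (1 - g - 1) = x ^ (1 - g) / x := by
    rw [Real.rpow_sub hx, Real.rpow_one]
  have hpow_sub_two : x ^ (1 - g - 1 - 1) = x ^ (1 - g) / x ^ 2 := by
    rw [Real.rpow_sub hx, Real.rpow_one, hpow_sub_one, sq, div_div]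
  simp only [laguerreOperator, eval_sub, eval_add, eval_mul, eval_X, eval_C, hpow_sub_one,
    hpow_sub_two]
  field_simp
  ring

/-- the pseudo virtual state wavefunctions
`φ̃_v(x) = e^{x²/2}·x^{1−g}·L_v^{(1/2−g)}(−x²)` of the radial oscillator satisfy
`−φ̃_v'' + (x² + g(g−1)/x² − (1+2g))·φ̃_v = −4(v+1)·φ̃_v` on `(0,∞)`. -/
theorem radial_pseudo_virtual_state (g : ℝ) (v : ℕ) :
    ∀ x ∈ Set.Ioi (0 : ℝ),
      -(deriv (deriv (fun y : ℝ =>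
          Real.exp (y ^ 2 / 2) * y ^ ((1 : ℝ) - g)
            * (laguerreL (1 / 2 - g) v).eval (-(y ^ 2)))) x)
        + (x ^ 2 + g * (g - 1) / x ^ 2 - (1 + 2 * g))
          * (Real.exp (x ^ 2 / 2) * x ^ ((1 : ℝ) - g)
              * (laguerreL (1 / 2 - g) v).eval (-(x ^ 2)))
      = -4 * (v + 1)
          * (Real.exp (x ^ 2 / 2) * x ^ ((1 : ℝ) - g)
              * (laguerreL (1 / 2 - g) v).eval (-(x ^ 2))) := by
  intro x hx
  rw [radialOscillator_gauge g _ hx, laguerreOperator_laguerreL]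
  simp only [sub_neg_eq_add, eval_add, eval_mul, eval_C]
  ring
end

section
/- For every even non-negative integer v, the real polynomial h̃_v has no real zeros; in fact h̃_v(x) > 0 for all real x. -/
open Polynomial

/-- Twisted Hermite polynomials `h̃_v(x) = i^{−v} H_v(ix)`:
`h̃₀ = 1`, `h̃_{v+1} = 2x·h̃_v + h̃_v'`. -/
noncomputable def hermiteTwist : ℕ → Polynomial ℝ
  | 0 => 1
  | v + 1 => 2 * X * hermiteTwist v + Polynomial.derivative (hermiteTwist v)

lemma hermiteTwist_succ (v : ℕ) :
    hermiteTwist (v + 1) = 2 * X * hermiteTwist v + Polynomial.derivative (hermiteTwist v) := rfl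

lemma coeff_two_X_mul (p : Polynomial ℝ) (n : ℕ) :
    (2 * X * p).coeff n = 2 * (X * p).coeff n := by
  have h2 : (C 2 : Polynomial ℝ) = 2 := map_ofNat C 2
  rw [show (2 : Polynomial ℝ) * X * p = C 2 * (X * p) by rw [h2]; ring, coeff_C_mul]

lemma hermiteTwist_coeff_nonneg (v : ℕ) : ∀ n, 0 ≤ (hermiteTwist v).coeff n := by
  induction v with
  | zero =>
    intro n
    simp only [hermiteTwist, coeff_one]
    split <;> norm_num
  | succ v ih =>
    intro n
    rw [hermiteTwist_succ, coeff_add, coeff_two_X_mul, coeff_derivative]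
    have h1 : 0 ≤ (X * hermiteTwist v).coeff n := by
      cases n with
      | zero => simp
      | succ m => rw [coeff_X_mul]; exact ih m
    have h2 : 0 ≤ (hermiteTwist v).coeff (n + 1) * (n + 1 : ℝ) := by
      have := ih (n + 1); positivity
    linarith

lemma hermiteTwist_coeff_odd (v : ℕ) : ∀ n, Odd (v + n) → (hermiteTwist v).coeff n = 0 := by
  induction v with
  | zero =>
    intro n hn
    have hn0 : n ≠ 0 := by rintro rfl; simp at hn
    simp [hermiteTwist, coeff_one, hn0]
  | succ v ih =>
    intro n hn
    rw [hermiteTwist_succ, coeff_add, coeff_two_X_mul, coeff_derivative]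
    have h1 : (X * hermiteTwist v).coeff n = 0 := by
      cases n with
      | zero => simp
      | succ m =>
        rw [coeff_X_mul]
        apply ih
        rw [Nat.odd_iff] at hn ⊢; omega
    have h2 : (hermiteTwist v).coeff (n + 1) = 0 := by
      apply ih
      rw [Nat.odd_iff] at hn ⊢; omega
    rw [h1, h2]
    ring

lemma hermiteTwist_coeff_zero_pos (k : ℕ) : 0 < (hermiteTwist (2 * k)).coeff 0 := by
  induction k with
  | zero => simp [hermiteTwist]
  | succ k ih =>
    have e2 : (hermiteTwist (2 * k + 2)).coeff 0 = (hermiteTwist (2 * k + 1)).coeff 1 := by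
      rw [hermiteTwist_succ, coeff_add, coeff_two_X_mul, coeff_derivative]
      simp
    have e1 : (hermiteTwist (2 * k + 1)).coeff 1
        = 2 * (hermiteTwist (2 * k)).coeff 0 + (hermiteTwist (2 * k)).coeff 2 * 2 := by
      rw [hermiteTwist_succ, coeff_add, coeff_two_X_mul, coeff_X_mul, coeff_derivative]
      norm_num
    have h2 := hermiteTwist_coeff_nonneg (2 * k) 2
    rw [show 2 * (k + 1) = 2 * k + 2 by ring, e2, e1]
    linarith

/-- for even `v` the twisted Hermite polynomial `h̃_v` is positive on ℝ
(in particular it has no real zeros). -/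
theorem hermiteTwist_pos_of_even (v : ℕ) (hv : Even v) :
    ∀ x : ℝ, 0 < (hermiteTwist v).eval x := by
  intro x
  rw [eval_eq_sum_range]
  apply Finset.sum_pos'
  · intro i _
    rcases eq_or_ne ((hermiteTwist v).coeff i) 0 with h | h
    · simp [h]
    · have hi : Even i := by
        by_contra hodd
        exact h (hermiteTwist_coeff_odd v i (hv.add_odd (Nat.not_even_iff_odd.mp hodd)))
      exact mul_nonneg (hermiteTwist_coeff_nonneg v i) (hi.pow_nonneg x)
  · refine ⟨0, Finset.mem_range.mpr (Nat.succ_pos _), ?_⟩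
    obtain ⟨k, rfl⟩ := hv
    have := hermiteTwist_coeff_zero_pos k
    rw [show k + k = 2 * k by ring] at *
    simpa using this
end
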